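/- arXiv:1311.2815 — 4 statements merged into one kernel-verified Lean document; each statement's English description precedes it below -/
import Mathlib

section
/- Let Jf : ℝⁿ ⇉ L(ℝⁿ, ℝⁿ) be a set-valued map with nonempty values which is upper semicontinuous at x (for every ε > 0 there is δ > 0 with Jf(x + δ𝐁ₙ) ⊆ Jf(x) + ε𝐁_{n×n}). Then sup_{β>0} α_{Jf}(x, β) = lim_{β→0⁺} α_{Jf}(x, β) = α_{Jf}(x), where α_{Jf}(x, β) = inf{//A// : A ∈ co(Jf(x + β𝐁ₙ))} and α_{Jf}(x) = inf{//A// : A ∈ co(Jf(x))}. -/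
open Pointwise
noncomputable def conorm {n : ℕ}
    (A : EuclideanSpace ℝ (Fin n) →L[ℝ] EuclideanSpace ℝ (Fin n)) : ℝ :=
  sInf ((fun u => ‖A u‖) '' {u | ‖u‖ = 1})

noncomputable def regIndex {n : ℕ}
    (Jf : EuclideanSpace ℝ (Fin n) →
      Set (EuclideanSpace ℝ (Fin n) →L[ℝ] EuclideanSpace ℝ (Fin n)))
    (x : EuclideanSpace ℝ (Fin n)) : ℝ :=
  sInf (conorm '' (convexHull ℝ (Jf x)))

noncomputable def regIndexBall {n : ℕ}
    (Jf : EuclideanSpace ℝ (Fin n) →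
      Set (EuclideanSpace ℝ (Fin n) →L[ℝ] EuclideanSpace ℝ (Fin n)))
    (x : EuclideanSpace ℝ (Fin n)) (β : ℝ) : ℝ :=
  sInf (conorm '' (convexHull ℝ (⋃ y ∈ Metric.ball x β, Jf y)))

/-- Upper semicontinuity of the set-valued map `Jf` at `x`. -/
def UscAt {n : ℕ}
    (Jf : EuclideanSpace ℝ (Fin n) →
      Set (EuclideanSpace ℝ (Fin n) →L[ℝ] EuclideanSpace ℝ (Fin n)))
    (x : EuclideanSpace ℝ (Fin n)) : Prop :=
  ∀ ε > (0 : ℝ), ∃ δ > (0 : ℝ),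
    (⋃ y ∈ Metric.ball x δ, Jf y) ⊆ Jf x + Metric.ball (0 : EuclideanSpace ℝ (Fin n) →L[ℝ] EuclideanSpace ℝ (Fin n)) ε

/-!
Enlarging the ball only enlarges the set whose convex hull is taken, so `β ↦ α_{Jf}(x, β)` is
antitone and bounded by `α_{Jf}(x)`. Conversely, upper semicontinuity puts
`co(Jf(x + δ𝐁ₙ))` inside `co(Jf(x)) + ε𝐁_{n×n}`, and the co-norm is 1-Lipschitz, so
`α_{Jf}(x) ≤ α_{Jf}(x, δ) + ε`. Both the supremum and the one-sided limit are therefore `α_{Jf}(x)`.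
-/

open Set Metric Filter Topology

section RealFunctions

variable {f : ℝ → ℝ} {L : ℝ}

/-- For `β ≤ 0` the inner supremum is over an empty type and takes the junk value `0`. -/
theorem biSup_pos_eq_of_le_of_forall_le_add (hL : 0 ≤ L) (hle : ∀ β > 0, f β ≤ L)
    (happrox : ∀ ε > 0, ∃ β > 0, L ≤ f β + ε) : (⨆ β > (0 : ℝ), f β) = L := by
  have hinner : ∀ β, (⨆ _ : β > (0 : ℝ), f β) ≤ L := fun β => Real.iSup_le (hle β) hL
  refine le_antisymm (Real.iSup_le hinner hL) (le_of_forall_pos_le_add fun ε hε => ?_)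
  obtain ⟨β, hβ, hLβ⟩ := happrox ε hε
  have hfβ : f β ≤ ⨆ β > (0 : ℝ), f β :=
    le_ciSup_of_le ⟨L, by rintro _ ⟨β, rfl⟩; exact hinner β⟩ β (by rw [ciSup_pos hβ])
  linarith

theorem tendsto_nhdsGT_zero_of_antitoneOn_of_le_of_forall_le_add (hf : AntitoneOn f (Ioi 0))
    (hle : ∀ β > 0, f β ≤ L) (happrox : ∀ ε > 0, ∃ β > 0, L ≤ f β + ε) :
    Tendsto f (𝓝[>] 0) (𝓝 L) := by
  refine tendsto_order.2 ⟨fun a ha => ?_, fun b hb => ?_⟩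
  · obtain ⟨δ, hδ, hLδ⟩ := happrox ((L - a) / 2) (by linarith)
    filter_upwards [Ioo_mem_nhdsGT hδ] with β hβ
    have : f δ ≤ f β := hf hβ.1 (mem_Ioi.2 hδ) hβ.2.le
    linarith
  · filter_upwards [self_mem_nhdsWithin] with β hβ
    exact (hle β hβ).trans_lt hb

end RealFunctions

theorem sInf_image_le_sInf_image_add_of_subset_add_ball {E : Type*} [SeminormedAddCommGroup E]
    {f : E → ℝ} (hf : LipschitzWith 1 f) {s t : Set E} (hs : s.Nonempty)
    (ht : BddBelow (f '' t)) {ε : ℝ} (hst : s ⊆ t + ball 0 ε) :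
    sInf (f '' t) ≤ sInf (f '' s) + ε := by
  rw [← sub_le_iff_le_add]
  refine le_csInf (hs.image f) ?_
  rintro _ ⟨_, hA, rfl⟩
  obtain ⟨B, hB, C, hC, rfl⟩ := hst hA
  have hfB : f B ≤ f (B + C) + ‖C‖ := by
    simpa [dist_eq_norm] using hf.le_add_mul B (B + C)
  have hC' : ‖C‖ < ε := mem_ball_zero_iff.1 hC
  linarith [csInf_le ht (mem_image_of_mem f hB)]

section Conorm

variable {n : ℕ}

theorem conorm_nonneg (A : EuclideanSpace ℝ (Fin n) →L[ℝ] EuclideanSpace ℝ (Fin n)) :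
    0 ≤ conorm A :=
  Real.sInf_nonneg (by rintro _ ⟨u, -, rfl⟩; positivity)

theorem bddBelow_conorm_image
    (s : Set (EuclideanSpace ℝ (Fin n) →L[ℝ] EuclideanSpace ℝ (Fin n))) :
    BddBelow (conorm '' s) :=
  ⟨0, by rintro _ ⟨A, -, rfl⟩; exact conorm_nonneg A⟩

theorem conorm_le_norm_apply (A : EuclideanSpace ℝ (Fin n) →L[ℝ] EuclideanSpace ℝ (Fin n))
    {u : EuclideanSpace ℝ (Fin n)} (hu : ‖u‖ = 1) : conorm A ≤ ‖A u‖ :=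
  csInf_le ⟨0, by rintro _ ⟨v, -, rfl⟩; positivity⟩ ⟨u, hu, rfl⟩

theorem lipschitzWith_one_conorm :
    LipschitzWith 1 (conorm : (EuclideanSpace ℝ (Fin n) →L[ℝ] EuclideanSpace ℝ (Fin n)) → ℝ) := by
  refine LipschitzWith.of_le_add fun A B => ?_
  rcases eq_empty_or_nonempty {u : EuclideanSpace ℝ (Fin n) | ‖u‖ = 1} with hS | hS
  · simp only [conorm, hS, image_empty, Real.sInf_empty]
    positivity
  rw [← sub_le_iff_le_add]
  refine le_csInf (hS.image _) ?_
  rintro _ ⟨u, hu, rfl⟩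
  have hAB : ‖A u‖ ≤ ‖B u‖ + dist A B := calc
    ‖A u‖ ≤ ‖B u‖ + ‖(A - B) u‖ := norm_le_norm_add_norm_sub' (A u) (B u)
    _ ≤ ‖B u‖ + ‖A - B‖ * ‖u‖ := by gcongr; exact (A - B).le_opNorm u
    _ = ‖B u‖ + dist A B := by rw [hu, mul_one, dist_eq_norm]
  linarith [conorm_le_norm_apply A hu]

theorem sInf_conorm_convexHull_anti
    {s t : Set (EuclideanSpace ℝ (Fin n) →L[ℝ] EuclideanSpace ℝ (Fin n))}
    (hs : s.Nonempty) (hst : s ⊆ t) :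
    sInf (conorm '' convexHull ℝ t) ≤ sInf (conorm '' convexHull ℝ s) :=
  csInf_le_csInf (bddBelow_conorm_image _) (hs.convexHull.image _)
    (image_mono (convexHull_mono hst))

end Conorm

section RegIndex

variable {n : ℕ}
  {Jf : EuclideanSpace ℝ (Fin n) →
    Set (EuclideanSpace ℝ (Fin n) →L[ℝ] EuclideanSpace ℝ (Fin n))}
  {x : EuclideanSpace ℝ (Fin n)}

theorem regIndex_nonneg : 0 ≤ regIndex Jf x :=
  Real.sInf_nonneg (by rintro _ ⟨A, -, rfl⟩; exact conorm_nonneg A)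

theorem regIndexBall_le_regIndex (hJ : (Jf x).Nonempty) {β : ℝ} (hβ : 0 < β) :
    regIndexBall Jf x β ≤ regIndex Jf x :=
  sInf_conorm_convexHull_anti hJ (subset_biUnion_of_mem (mem_ball_self hβ))

theorem regIndexBall_antitoneOn (hJ : (Jf x).Nonempty) :
    AntitoneOn (regIndexBall Jf x) (Ioi 0) := fun _ hβ₁ _ _ hβ₁₂ =>
  sInf_conorm_convexHull_anti (hJ.mono (subset_biUnion_of_mem (mem_ball_self hβ₁)))
    (biUnion_mono (ball_subset_ball hβ₁₂) fun _ _ => subset_rfl)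

theorem regIndex_le_regIndexBall_add (hJ : (Jf x).Nonempty) {δ ε : ℝ} (hδ : 0 < δ)
    (hsub : (⋃ y ∈ ball x δ, Jf y) ⊆ Jf x + ball 0 ε) :
    regIndex Jf x ≤ regIndexBall Jf x δ + ε := by
  have hhull : convexHull ℝ (⋃ y ∈ ball x δ, Jf y) ⊆ convexHull ℝ (Jf x) + ball 0 ε := by
    simpa only [convexHull_add, (convex_ball _ _).convexHull_eq] using
      convexHull_mono (𝕜 := ℝ) hsub
  exact sInf_image_le_sInf_image_add_of_subset_add_ball lipschitzWith_one_conorm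
    ((hJ.mono (subset_biUnion_of_mem (mem_ball_self hδ))).convexHull (𝕜 := ℝ))
    (bddBelow_conorm_image _) hhull

end RegIndex

theorem regIndexBall_tendsto_regIndex {n : ℕ}
    (Jf : EuclideanSpace ℝ (Fin n) →
      Set (EuclideanSpace ℝ (Fin n) →L[ℝ] EuclideanSpace ℝ (Fin n)))
    (hJ : ∀ y, (Jf y).Nonempty) (x : EuclideanSpace ℝ (Fin n))
    (husc : UscAt Jf x) :
    (⨆ β > (0 : ℝ), regIndexBall Jf x β) = regIndex Jf x ∧
    Filter.Tendsto (fun β => regIndexBall Jf x β) (nhdsWithin 0 (Set.Ioi 0))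
      (nhds (regIndex Jf x)) := by
  have hle : ∀ β > 0, regIndexBall Jf x β ≤ regIndex Jf x :=
    fun _ hβ => regIndexBall_le_regIndex (hJ x) hβ
  have happrox : ∀ ε > 0, ∃ δ > 0, regIndex Jf x ≤ regIndexBall Jf x δ + ε := fun ε hε =>
    let ⟨δ, hδ, hsub⟩ := husc ε hε
    ⟨δ, hδ, regIndex_le_regIndexBall_add (hJ x) hδ hsub⟩
  exact ⟨biSup_pos_eq_of_le_of_forall_le_add regIndex_nonneg hle happrox,
    tendsto_nhdsGT_zero_of_antitoneOn_of_le_of_forall_le_add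
      (regIndexBall_antitoneOn (hJ x)) hle happrox⟩
end

section
/- Let E, F be Banach spaces, U ⊆ E open, f : U → F continuous, and q : [a,b] → U a continuous path with q(a) ≠ q(b) such that p = f ∘ q is rectifiable. Then there exists τ ∈ [a,b] with ℓ(p) ≥ D⁻_{q(τ)}f · ‖q(b) − q(a)‖, where ℓ(p) is the length of p and D⁻ₓf = liminf_{y→x} ‖f(y) − f(x)‖/‖y − x‖ is the lower scalar Dini derivative. -/
/-!
If the conclusion failed, the Dini derivative would exceed `c = ℓ(p) / ‖q b - q a‖` at every
point of the path, so near each parameter `τ` the increments of `p` dominate `c` times those of `q`,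
strictly where `q` moves. A continuous induction along `[a, b]` propagates the strict inequality
`c ‖q t - q a‖ < ℓ(p|[a,t])`; at `t = b` it reads `ℓ(p) < ℓ(p)`.
-/

/-- The lower scalar Dini derivative of `f` at `x`, with values in `EReal`. -/
noncomputable def lowerDini {E F : Type*} [NormedAddCommGroup E] [NormedAddCommGroup F]
    (f : E → F) (x : E) : EReal :=
  Filter.liminf (fun y => ((‖f y - f x‖ / ‖y - x‖ : ℝ) : EReal)) (nhdsWithin x {x}ᶜ)

open Set Filter Topology

theorem right_mem_of_continuous_induction {α : Type*} [ConditionallyCompleteLinearOrder α]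
    [TopologicalSpace α] [OrderTopology α] [DenselyOrdered α] {a b : α} {s : Set α}
    (hab : a ≤ b) (ha : a ∈ s)
    (hloc : ∀ τ ∈ Icc a b, ∀ᶠ x in 𝓝[Icc a b] τ,
      (x < τ → x ∈ s → τ ∈ s) ∧ (τ < x → τ ∈ s → x ∈ s)) :
    b ∈ s := by
  have hne : (s ∩ Icc a b).Nonempty := ⟨a, ha, left_mem_Icc.2 hab⟩
  have hbdd : BddAbove (s ∩ Icc a b) := ⟨b, fun x hx => hx.2.2⟩
  set T := sSup (s ∩ Icc a b)
  have hT : T ∈ Icc a b := ⟨le_csSup hbdd ⟨ha, left_mem_Icc.2 hab⟩, csSup_le hne fun x hx => hx.2.2⟩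
  obtain ⟨N, hN, hNloc⟩ := mem_nhdsWithin_iff_exists_mem_nhds_inter.1 (hloc T hT)
  have hTs : T ∈ s := by
    rcases hT.1.eq_or_lt with haT | haT
    · exact haT ▸ ha
    obtain ⟨l, hlT, hl⟩ := exists_Ioc_subset_of_mem_nhds hN ⟨a, haT⟩
    obtain ⟨x, hx, hlx⟩ := exists_lt_of_lt_csSup hne hlT
    rcases (le_csSup hbdd hx).eq_or_lt with rfl | hxT
    · exact hx.1
    exact (hNloc ⟨hl ⟨hlx, hxT.le⟩, hx.2⟩).1 hxT hx.1
  by_contra hb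
  have hTb : T < b := hT.2.lt_of_ne fun h => hb (h ▸ hTs)
  obtain ⟨u, hTu, hu⟩ := exists_Ico_subset_of_mem_nhds hN ⟨b, hTb⟩
  obtain ⟨y, hTy, hy⟩ := exists_between (lt_min hTu hTb)
  have hyI : y ∈ Icc a b := ⟨hT.1.trans hTy.le, hy.le.trans (min_le_right _ _)⟩
  have hys : y ∈ s := (hNloc ⟨hu ⟨hTy.le, hy.trans_le (min_le_left _ _)⟩, hyI⟩).2 hTy hTs
  exact hTy.not_ge (le_csSup hbdd ⟨hys, hyI⟩)

theorem variationOnFromTo.add_dist_le {α E : Type*} [LinearOrder α] [PseudoMetricSpace E]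
    {g : α → E} {s : Set α} (hg : LocallyBoundedVariationOn g s) {a x y : α}
    (ha : a ∈ s) (hx : x ∈ s) (hy : y ∈ s) (hxy : x ≤ y) :
    variationOnFromTo g s a x + dist (g x) (g y) ≤ variationOnFromTo g s a y := by
  rw [← variationOnFromTo.add hg ha hx hy, variationOnFromTo.eq_of_le g s hxy]
  gcongr
  exact (hg x y hx hy).dist_le ⟨hx, le_rfl, hxy⟩ ⟨hy, hxy, le_rfl⟩

section

variable {E F : Type*} [NormedAddCommGroup E] [NormedAddCommGroup F] {f : E → F}

theorem eventually_eq_or_mul_norm_sub_lt_of_lt_lowerDini {x : E} {c : ℝ}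
    (h : (c : EReal) < lowerDini f x) :
    ∀ᶠ y in 𝓝 x, y = x ∨ c * ‖y - x‖ < ‖f y - f x‖ := by
  filter_upwards [eventually_nhdsWithin_iff.1 (eventually_lt_of_lt_liminf h)] with y hy
  rcases eq_or_ne y x with hyx | hyx
  · exact Or.inl hyx
  · have hpos : 0 < ‖y - x‖ := norm_pos_iff.2 (sub_ne_zero.2 hyx)
    exact Or.inr ((lt_div_iff₀ hpos).1 (EReal.coe_lt_coe_iff.1 (hy hyx)))

theorem mul_norm_sub_lt_variation_of_lt_lowerDini {q : ℝ → E} {a b c : ℝ} (hab : a ≤ b)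
    (hq : ContinuousOn q (Icc a b)) (hbv : BoundedVariationOn (f ∘ q) (Icc a b)) (hc : 0 ≤ c)
    (hD : ∀ τ ∈ Icc a b, (c : EReal) < lowerDini f (q τ)) (hne : q a ≠ q b) :
    c * ‖q b - q a‖ < (eVariationOn (f ∘ q) (Icc a b)).toReal := by
  set V := variationOnFromTo (f ∘ q) (Icc a b) a
  have haI : a ∈ Icc a b := left_mem_Icc.2 hab
  have hlocal : ∀ τ ∈ Icc a b, ∀ᶠ x in 𝓝[Icc a b] τ,
      q x = q τ ∨ c * ‖q x - q τ‖ < ‖f (q x) - f (q τ)‖ := fun τ hτ =>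
    (hq τ hτ).eventually (eventually_eq_or_mul_norm_sub_lt_of_lt_lowerDini (hD τ hτ))
  have hstep : ∀ x ∈ Icc a b, ∀ y ∈ Icc a b, x ≤ y →
      (q y = q x ∨ c * ‖q y - q x‖ < ‖f (q y) - f (q x)‖) →
      (q x = q a ∨ c * ‖q x - q a‖ < V x) → q y = q a ∨ c * ‖q y - q a‖ < V y := by
    intro x hx y hy hxy hQ hP
    have hV : V x + ‖f (q y) - f (q x)‖ ≤ V y := by
      simpa [dist_eq_norm'] using
        variationOnFromTo.add_dist_le hbv.locallyBoundedVariationOn haI hx hy hxy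
    have hVx : 0 ≤ V x := variationOnFromTo.nonneg_of_le _ _ hx.1
    have htri : c * ‖q y - q a‖ ≤ c * ‖q y - q x‖ + c * ‖q x - q a‖ := by
      rw [← mul_add]; exact mul_le_mul_of_nonneg_left (norm_sub_le_norm_sub_add_norm_sub _ _ _) hc
    have hPx : c * ‖q x - q a‖ ≤ V x := hP.elim (fun h => by simpa [h] using hVx) le_of_lt
    rcases hQ with hQ | hQ
    · rw [hQ]
      exact hP.imp_right fun h => by linarith [norm_nonneg (f (q y) - f (q x))]
    · exact Or.inr (by linarith)
  have hb : q b = q a ∨ c * ‖q b - q a‖ < V b := by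
    refine right_mem_of_continuous_induction (s := {t | q t = q a ∨ c * ‖q t - q a‖ < V t})
      hab (Or.inl rfl) fun τ hτ => ?_
    filter_upwards [hlocal τ hτ, self_mem_nhdsWithin] with x hQ hx
    refine ⟨fun hxτ => hstep x hx τ hτ hxτ.le ?_, fun hτx => hstep τ hτ x hx hτx.le hQ⟩
    rwa [eq_comm, norm_sub_rev, norm_sub_rev (f (q x))] at hQ
  have hVb : V b = (eVariationOn (f ∘ q) (Icc a b)).toReal := by
    simp only [V, variationOnFromTo.eq_of_le _ _ hab, inter_self]
  exact hVb ▸ hb.resolve_left hne.symm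

end

theorem mean_value_inequality_length_general
    {E F : Type*} [NormedAddCommGroup E] [NormedAddCommGroup F] (f : E → F)
    (a b : ℝ) (hab : a ≤ b) (q : ℝ → E) (hq : ContinuousOn q (Set.Icc a b)) (hne : q a ≠ q b)
    (hrect : eVariationOn (f ∘ q) (Set.Icc a b) ≠ ⊤) :
    ∃ τ ∈ Set.Icc a b,
      lowerDini f (q τ) * ((‖q b - q a‖ : ℝ) : EReal)
        ≤ (((eVariationOn (f ∘ q) (Set.Icc a b)).toReal : ℝ) : EReal) := by
  by_contra! hcon
  set ℓ := (eVariationOn (f ∘ q) (Set.Icc a b)).toReal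
  set n := ‖q b - q a‖
  have hn : 0 < n := norm_pos_iff.2 (sub_ne_zero.2 hne.symm)
  have hD : ∀ τ ∈ Set.Icc a b, ((ℓ / n : ℝ) : EReal) < lowerDini f (q τ) := fun τ hτ => by
    rw [EReal.coe_div, EReal.div_lt_iff (by exact_mod_cast hn) (EReal.coe_ne_top n)]
    exact hcon τ hτ
  have := mul_norm_sub_lt_variation_of_lt_lowerDini hab hq hrect
    (div_nonneg ENNReal.toReal_nonneg hn.le) hD hne
  rw [div_mul_cancel₀ ℓ hn.ne'] at this
  exact lt_irrefl ℓ this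

theorem mean_value_inequality_length
    {E F : Type*} [NormedAddCommGroup E] [NormedSpace ℝ E] [CompleteSpace E]
    [NormedAddCommGroup F] [NormedSpace ℝ F] [CompleteSpace F]
    (U : Set E) (hU : IsOpen U) (f : E → F) (hf : ContinuousOn f U)
    (a b : ℝ) (hab : a ≤ b) (q : ℝ → E) (hq : ContinuousOn q (Set.Icc a b))
    (hqU : ∀ t ∈ Set.Icc a b, q t ∈ U) (hne : q a ≠ q b)
    (hrect : eVariationOn (f ∘ q) (Set.Icc a b) ≠ ⊤) :
    ∃ τ ∈ Set.Icc a b,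
      lowerDini f (q τ) * ((‖q b - q a‖ : ℝ) : EReal)
        ≤ (((eVariationOn (f ∘ q) (Set.Icc a b)).toReal : ℝ) : EReal) :=
  mean_value_inequality_length_general f a b hab q hq hne hrect
end

section
/- Let E, F be Banach spaces and f : E → F a local homeomorphism. Suppose inf_{‖x‖ ≤ r} D⁻ₓf > 0 for every r ≥ 0, and there exists a Riemann-integrable function η : [0,∞) → (0,∞) with ∫₀^∞ η(t) dt = ∞ and 0 < η(t) ≤ inf_{‖x‖=t} D⁻ₓf for all t ≥ 0. Then f is a global homeomorphism from E onto F, and moreover ‖f(x) − f(0)‖ ≥ ∫₀^{‖x‖} η(t) dt for every x ∈ E. -/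
/-!
Lift the segment `s ↦ f x₀ + s • w` through the local homeomorphism `f`. Along a lift `γ`, the
bound `η ‖x‖ ≤ D⁻ₓf` says that `‖γ‖` grows at most at rate `‖w‖ / η (‖γ‖)`; integrating this
(through the first passage times of `‖γ‖`, a monotone function with derivative at least
`η / ‖w‖`) gives `∫₀^{‖γ s‖} η ≤ ∫₀^{‖x₀‖} η + s ‖w‖`. As `∫₀^∞ η = ∞`, all partial lifts stay in
a fixed ball, on which `D⁻f` is bounded below by some `m > 0`, so they are uniformly Lipschitz and,
`E` being complete, can be continued over the whole segment.

The endpoints of the lifts of the segments from `f 0` then form a continuous right inverse `g` of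
`f` (homotopy lifting), and uniqueness of lifts over the connected space `E` forces `g ∘ f = id`.
The integral inequality for the lift from `0` to `x` is the stated estimate.
-/

open Filter Set MeasureTheory Topology NNReal

lemma HasDerivAt.le_mul_of_eventually_le {G : ℝ → ℝ} {d m K t : ℝ} (hG : HasDerivAt G d t)
    (h : ∀ᶠ t' in 𝓝[>] t, m * (t' - t) ≤ K * (G t' - G t)) : m ≤ K * d := by
  have hslope :=
    (hasDerivWithinAt_iff_tendsto_slope' (s := Ioi t) (lt_irrefl t)).1 hG.hasDerivWithinAt
  refine ge_of_tendsto (hslope.const_mul K) ?_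
  filter_upwards [h, self_mem_nhdsWithin] with t' h' (ht' : t < t')
  rw [slope_def_field, mul_div_assoc', le_div_iff₀ (sub_pos.2 ht')]
  linarith

noncomputable def firstPassage (ρ : ℝ → ℝ) (u v t : ℝ) : ℝ := sInf {s ∈ Icc u v | t ≤ ρ s}

section FirstPassage

variable {ρ : ℝ → ℝ} {u v s t : ℝ}

lemma firstPassage_le (hs : s ∈ Icc u v) (ht : t ≤ ρ s) : firstPassage ρ u v t ≤ s :=
  csInf_le ⟨u, fun _ h => h.1.1⟩ ⟨hs, ht⟩

lemma firstPassage_mem (huv : u ≤ v) (hρ : ContinuousOn ρ (Icc u v)) (ht : t ≤ ρ v) :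
    firstPassage ρ u v t ∈ {s ∈ Icc u v | t ≤ ρ s} :=
  (hρ.preimage_isClosed_of_isClosed isClosed_Icc isClosed_Ici).csInf_mem
    ⟨v, right_mem_Icc.2 huv, ht⟩ ⟨u, fun _ h => h.1.1⟩

lemma monotoneOn_firstPassage (huv : u ≤ v) (hρ : ContinuousOn ρ (Icc u v)) :
    MonotoneOn (firstPassage ρ u v) (Iic (ρ v)) := fun _ _ _ ht' htt' =>
  let h := firstPassage_mem huv hρ ht'
  firstPassage_le h.1 (htt'.trans h.2)

lemma apply_firstPassage (huv : u ≤ v) (hρ : ContinuousOn ρ (Icc u v))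
    (ht : t ∈ Icc (ρ u) (ρ v)) : ρ (firstPassage ρ u v t) = t := by
  obtain ⟨hG, htG⟩ := firstPassage_mem huv hρ ht.2
  obtain ⟨s, hs, rfl⟩ :=
    intermediate_value_Icc hG.1 (hρ.mono (Icc_subset_Icc_right hG.2)) ⟨ht.1, htG⟩
  exact congrArg ρ (le_antisymm (firstPassage_le ⟨hs.1, hs.2.trans hG.2⟩ le_rfl) hs.2)

variable {η : ℝ → ℝ} {K : ℝ}

lemma le_mul_deriv_firstPassage (huv : u ≤ v) (hK : 0 ≤ K) (hρ : ContinuousOn ρ (Icc u v))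
    (hloc : ∀ s ∈ Ico u v, ∀ m, 0 < m → m < η (ρ s) →
      ∀ᶠ z in 𝓝[>] s, m * (ρ z - ρ s) ≤ K * (z - s))
    (ht : t ∈ Ioo (ρ u) (ρ v)) (hd : DifferentiableAt ℝ (firstPassage ρ u v) t) :
    η t ≤ K * deriv (firstPassage ρ u v) t := by
  set G := firstPassage ρ u v
  have hI : ∀ t' ∈ Ico t (ρ v), t' ∈ Icc (ρ u) (ρ v) := fun t' h => ⟨ht.1.le.trans h.1, h.2.le⟩
  have hGt : G t ∈ Icc u v := (firstPassage_mem huv hρ ht.2.le).1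
  have hρG : ∀ t' ∈ Ico t (ρ v), ρ (G t') = t' := fun t' h => apply_firstPassage huv hρ (hI t' h)
  have hmono : ∀ t' ∈ Ico t (ρ v), G t ≤ G t' := fun t' h =>
    monotoneOn_firstPassage huv hρ ht.2.le h.2.le h.1
  have hnear : ∀ᶠ t' in 𝓝[>] t, t' ∈ Ioo t (ρ v) := Ioo_mem_nhdsGT ht.2
  refine forall_lt_imp_le_iff_le_of_dense.1 fun m hm => hd.hasDerivAt.le_mul_of_eventually_le ?_
  rcases le_or_gt m 0 with hm0 | hm0
  · filter_upwards [hnear] with t' ht'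
    nlinarith [ht'.1, hmono t' (Ioo_subset_Ico_self ht')]
  have hGt_lt : G t < v := hGt.2.lt_of_ne fun h => ht.2.ne' (h ▸ hρG t ⟨le_rfl, ht.2⟩)
  have hGright : Tendsto G (𝓝[>] t) (𝓝[>] (G t)) := by
    refine tendsto_nhdsWithin_iff.2 ⟨hd.continuousAt.tendsto.mono_left nhdsWithin_le_nhds, ?_⟩
    filter_upwards [hnear] with t' ht'
    refine (hmono t' (Ioo_subset_Ico_self ht')).lt_of_ne fun h => ht'.1.ne ?_
    rw [← hρG t ⟨le_rfl, ht.2⟩, ← hρG t' (Ioo_subset_Ico_self ht'), h]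
  have hηt : m < η (ρ (G t)) := by rwa [hρG t ⟨le_rfl, ht.2⟩]
  filter_upwards [hGright.eventually (hloc _ ⟨hGt.1, hGt_lt⟩ m hm0 hηt), hnear] with t' h' ht'
  rwa [hρG t ⟨le_rfl, ht.2⟩, hρG t' (Ioo_subset_Ico_self ht')] at h'

/-- `G = firstPassage ρ u v` is monotone with `η ≤ K G'` almost everywhere, and the integral of the
derivative of a monotone function is at most its increment. -/
theorem integral_le_mul_of_eventually_mul_sub_le (huv : u ≤ v) (hK : 0 ≤ K)
    (hρ : ContinuousOn ρ (Icc u v)) (hρuv : ρ u ≤ ρ v)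
    (hη : IntervalIntegrable η volume (ρ u) (ρ v))
    (hloc : ∀ s ∈ Ico u v, ∀ m, 0 < m → m < η (ρ s) →
      ∀ᶠ z in 𝓝[>] s, m * (ρ z - ρ s) ≤ K * (z - s)) :
    ∫ t in ρ u..ρ v, η t ≤ K * (v - u) := by
  set G := firstPassage ρ u v
  have hG : MonotoneOn G (Icc (ρ u) (ρ v)) :=
    (monotoneOn_firstPassage huv hρ).mono Icc_subset_Iic_self
  have hae : η ≤ᵐ[volume.restrict (Icc (ρ u) (ρ v))] fun t => K * deriv G t := by
    rw [← restrict_Ioo_eq_restrict_Icc]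
    filter_upwards [(hG.mono Ioo_subset_Icc_self).ae_differentiableWithinAt measurableSet_Ioo,
      ae_restrict_mem measurableSet_Ioo] with t hd ht
    exact le_mul_deriv_firstPassage huv hK hρ hloc ht
      (hd.differentiableAt (Ioo_mem_nhds ht.1 ht.2))
  have hGuv : G (ρ v) - G (ρ u) ≤ v - u := by
    linarith [(firstPassage_mem huv hρ le_rfl).1.2, (firstPassage_mem huv hρ hρuv).1.1]
  have hG' : MonotoneOn G (uIcc (ρ u) (ρ v)) := by rwa [uIcc_of_le hρuv]
  have hderiv := hG'.intervalIntegral_deriv_mem_uIcc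
  rw [uIcc_of_le (sub_nonneg.2 (hG (left_mem_Icc.2 hρuv) (right_mem_Icc.2 hρuv) hρuv))]
    at hderiv
  calc ∫ t in ρ u..ρ v, η t ≤ ∫ t in ρ u..ρ v, K * deriv G t :=
        intervalIntegral.integral_mono_ae_restrict hρuv hη
          (hG'.intervalIntegrable_deriv.const_mul K) hae
    _ = K * ∫ t in ρ u..ρ v, deriv G t := intervalIntegral.integral_const_mul K _
    _ ≤ K * (v - u) := mul_le_mul_of_nonneg_left (hderiv.2.trans hGuv) hK

end FirstPassage

section Lift

variable {E X : Type*} [TopologicalSpace E]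

def IsLiftOn (p : E → X) (σ : ℝ → X) (γ : ℝ → E) (s : Set ℝ) : Prop :=
  ContinuousOn γ s ∧ EqOn (p ∘ γ) σ s

variable {p : E → X} {σ : ℝ → X} {γ γ' : ℝ → E} {a b c : ℝ} {e₀ : E}

lemma IsLiftOn.mono {s t : Set ℝ} (h : IsLiftOn p σ γ s) (hts : t ⊆ s) : IsLiftOn p σ γ t :=
  ⟨h.1.mono hts, h.2.mono hts⟩

variable [TopologicalSpace X]

lemma IsLiftOn.eqOn [T2Space E] (hp : IsLocalHomeomorph p) (h : IsLiftOn p σ γ (Icc a b))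
    (h' : IsLiftOn p σ γ' (Icc a b)) (hc : c ∈ Icc a b) (hγc : γ c = γ' c) :
    EqOn γ γ' (Icc a b) :=
  (T2Space.isSeparatedMap p).eqOn_of_comp_eqOn hp.isLocallyInjective isPreconnected_Icc h.1 h'.1
    (h.2.trans h'.2.symm) hc hγc

lemma IsLiftOn.piecewise_symm (h : IsLiftOn p σ γ (Icc a b)) (hab : a ≤ b)
    (e : OpenPartialHomeomorph E X) (hpe : p = e) (hσ : ContinuousOn σ (Icc b c))
    (hb : γ b ∈ e.source) (hσe : MapsTo σ (Icc b c) e.target) :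
    IsLiftOn p σ (fun s => if s ≤ b then γ s else e.symm (σ s)) (Icc a c) := by
  have hjoin : γ b = e.symm (σ b) := by
    rw [← e.left_inv hb, ← h.2 (right_mem_Icc.2 hab), Function.comp_apply, hpe]
  refine ⟨ContinuousOn.if ?_ (h.1.mono ?_) ((e.continuousOn_symm.comp hσ hσe).mono ?_), ?_⟩
  · intro s hs
    rw [show s = b by simpa using frontier_le_subset_eq continuous_id continuous_const hs.2]
    exact hjoin
  · rintro s ⟨hs, hsb⟩
    change s ∈ closure (Iic b) at hsb
    rw [closure_Iic] at hsb
    exact ⟨hs.1, hsb⟩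
  · rintro s ⟨hs, hsb⟩
    simp only [not_le] at hsb
    change s ∈ closure (Ioi b) at hsb
    rw [closure_Ioi] at hsb
    exact ⟨hsb, hs.2⟩
  · intro s hs
    by_cases hsb : s ≤ b
    · simp only [Function.comp_apply, if_pos hsb]
      exact h.2 ⟨hs.1, hsb⟩
    · simp only [Function.comp_apply, if_neg hsb, hpe]
      exact e.right_inv (hσe ⟨(not_le.1 hsb).le, hs.2⟩)

lemma exists_eqOn_of_isLiftOn [T2Space E] (hp : IsLocalHomeomorph p) (e₀ : E) :
    ∃ Γ : ℝ → E, ∀ s γ, IsLiftOn p σ γ (Icc 0 s) → γ 0 = e₀ → EqOn γ Γ (Icc 0 s) := by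
  classical
  refine ⟨fun r => if h : ∃ γ, IsLiftOn p σ γ (Icc 0 r) ∧ γ 0 = e₀ then h.choose r else e₀, ?_⟩
  intro s γ hγ hγ₀ r hr
  have hγr := hγ.mono (Icc_subset_Icc_right hr.2)
  have h : ∃ γ, IsLiftOn p σ γ (Icc 0 r) ∧ γ 0 = e₀ := ⟨γ, hγr, hγ₀⟩
  simp only [dif_pos h]
  exact hγr.eqOn hp h.choose_spec.1 (left_mem_Icc.2 hr.1) (hγ₀.trans h.choose_spec.2.symm)
    (right_mem_Icc.2 hr.1)

lemma exists_isLiftOn_of_tendsto [T2Space X] (hp : IsLocalHomeomorph p) (hσ : Continuous σ)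
    {q : ℕ → ℝ} (hq : Tendsto q atTop (𝓝 c)) (hq₀ : ∀ n, 0 ≤ q n) {Λ : ℕ → ℝ → E}
    (hΛ : ∀ n, IsLiftOn p σ (Λ n) (Icc 0 (q n))) (hΛ₀ : ∀ n, Λ n 0 = e₀) {z : E}
    (hz : Tendsto (fun n => Λ n (q n)) atTop (𝓝 z)) :
    ∃ δ > 0, ∀ b ≤ c + δ, ∃ γ, IsLiftOn p σ γ (Icc 0 b) ∧ γ 0 = e₀ := by
  have hpz : p z = σ c := by
    refine tendsto_nhds_unique ((hp.continuous.tendsto z).comp hz) ?_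
    exact ((hσ.tendsto c).comp hq).congr fun n => ((hΛ n).2 (right_mem_Icc.2 (hq₀ n))).symm
  obtain ⟨e, hze, hpe⟩ := hp z
  have hσc : σ c ∈ e.target := by
    rw [← hpz, hpe]
    exact e.map_source hze
  obtain ⟨δ, hδ, hδe⟩ := Metric.mem_nhds_iff.1
    (hσ.continuousAt.preimage_mem_nhds (e.open_target.mem_nhds hσc))
  obtain ⟨N, hqN, hΛN⟩ := ((hq.eventually (Ioi_mem_nhds (sub_lt_self c hδ))).and
    (hz.eventually (e.open_source.mem_nhds hze))).exists
  refine ⟨δ / 2, half_pos hδ, fun b hb => ⟨_, (hΛ N).piecewise_symm (hq₀ N) e hpe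
    hσ.continuousOn hΛN fun s hs => hδe ?_, by simpa only [if_pos (hq₀ N)] using hΛ₀ N⟩⟩
  rw [Metric.mem_ball, Real.dist_eq, abs_lt]
  constructor <;> linarith [hs.1, hs.2]

lemma continuous_isLiftOn_apply_one {A : Type*} [T2Space E] [TopologicalSpace A]
    (hp : IsLocalHomeomorph p) {H : ℝ × A → X} (hH : Continuous H) {Γ : A → ℝ → E}
    (hΓ : ∀ a, IsLiftOn p (fun s => H (s, a)) (Γ a) (Icc 0 1))
    (hΓ₀ : Continuous fun a => Γ a 0) :
    Continuous fun a => Γ a 1 := by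
  have hlift := hp.continuous_lift (T2Space.isSeparatedMap p)
    ⟨fun q : unitInterval × A => H (q.1, q.2),
      hH.comp (continuous_subtype_val.prodMap continuous_id)⟩
    (g := fun q => Γ q.2 q.1) (funext fun q => (hΓ q.2).2 q.1.2) hΓ₀
    fun a => (hΓ a).1.comp_continuous continuous_subtype_val Subtype.prop
  exact hlift.comp (Continuous.prodMk_right (1 : unitInterval))

end Lift

/-- With uniformly Lipschitz partial lifts, the lifts up to `c = sup {s | a lift on [0, s] exists}`
have converging endpoints, and a chart at the limit continues them beyond `c` unless `c = 1`. -/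
theorem exists_isLiftOn_of_lipschitzOnWith {E X : Type*} [MetricSpace E] [CompleteSpace E]
    [TopologicalSpace X] [T2Space X] {p : E → X} {σ : ℝ → X} (hp : IsLocalHomeomorph p)
    (hσ : Continuous σ) {e₀ : E} (he₀ : p e₀ = σ 0) {L : ℝ≥0}
    (hL : ∀ s ∈ Icc (0 : ℝ) 1, ∀ γ, IsLiftOn p σ γ (Icc 0 s) → γ 0 = e₀ →
      LipschitzOnWith L γ (Icc 0 s)) :
    ∃ γ, IsLiftOn p σ γ (Icc 0 1) ∧ γ 0 = e₀ := by
  set A := {s ∈ Icc (0 : ℝ) 1 | ∃ γ, IsLiftOn p σ γ (Icc 0 s) ∧ γ 0 = e₀}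
  have hA : BddAbove A := ⟨1, fun s hs => hs.1.2⟩
  have h0A : (0 : ℝ) ∈ A := by
    refine ⟨left_mem_Icc.2 zero_le_one, fun _ => e₀, ⟨continuousOn_const, fun s hs => ?_⟩, rfl⟩
    rw [Icc_self, mem_singleton_iff] at hs
    rw [hs, Function.comp_apply, he₀]
  obtain ⟨Γ, hΓ_eq⟩ := exists_eqOn_of_isLiftOn (σ := σ) hp e₀
  have hΓ : LipschitzOnWith L Γ A := by
    refine LipschitzOnWith.of_dist_le_mul fun r hr r' hr' => ?_
    wlog h : r ≤ r' generalizing r r'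
    · rw [dist_comm, dist_comm r]
      exact this r' hr' r hr (le_of_not_ge h)
    obtain ⟨γ, hγ, hγ₀⟩ := hr'.2
    have hr_mem : r ∈ Icc 0 r' := ⟨hr.1.1, h⟩
    have hr'_mem : r' ∈ Icc 0 r' := ⟨hr'.1.1, le_rfl⟩
    rw [← hΓ_eq _ _ hγ hγ₀ hr_mem, ← hΓ_eq _ _ hγ hγ₀ hr'_mem]
    exact (hL r' hr'.1 γ hγ hγ₀).dist_le_mul _ hr_mem _ hr'_mem
  obtain ⟨q, -, hq, hqA⟩ := exists_seq_tendsto_sSup ⟨0, h0A⟩ hA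
  obtain ⟨z, hz⟩ := cauchySeq_tendsto_of_complete
    (hΓ.cauchySeq_comp hq.cauchySeq (range_subset_iff.2 hqA))
  choose Λ hΛ hΛ₀ using fun n => (hqA n).2
  have hΛz : Tendsto (fun n => Λ n (q n)) atTop (𝓝 z) :=
    hz.congr fun n => (hΓ_eq _ _ (hΛ n) (hΛ₀ n) (right_mem_Icc.2 (hqA n).1.1)).symm
  obtain ⟨δ, hδ, hextend⟩ :=
    exists_isLiftOn_of_tendsto hp hσ hq (fun n => (hqA n).1.1) hΛ hΛ₀ hΛz
  have hc1 : 1 ≤ sSup A + δ := by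
    by_contra! hc
    have hcA : sSup A + δ ∈ A := ⟨⟨by linarith [le_csSup hA h0A], hc.le⟩, hextend _ le_rfl⟩
    linarith [le_csSup hA hcA]
  exact hextend 1 hc1

section Dini

variable {E F : Type*} [NormedAddCommGroup E] [NormedAddCommGroup F] {f : E → F}

lemma eventually_mul_norm_sub_le_of_lt_lowerDini {x : E} {m : ℝ}
    (h : (m : EReal) < lowerDini f x) : ∀ᶠ y in 𝓝 x, m * ‖y - x‖ ≤ ‖f y - f x‖ := by
  filter_upwards [eventually_nhdsWithin_iff.1 (eventually_lt_of_lt_liminf h)] with y hy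
  rcases eq_or_ne y x with rfl | hne
  · simp
  · have := EReal.coe_lt_coe_iff.1 (hy hne)
    exact ((lt_div_iff₀ (norm_pos_iff.2 (sub_ne_zero.2 hne))).1 this).le

variable {σ : ℝ → F} {γ : ℝ → E} {u v : ℝ} {K : ℝ≥0} {η : ℝ → ℝ}

lemma IsLiftOn.eventually_mul_norm_sub_le (hγ : IsLiftOn f σ γ (Icc u v))
    (hσ : LipschitzWith K σ) {s m : ℝ} (hs : s ∈ Ico u v)
    (hm : (m : EReal) < lowerDini f (γ s)) :
    ∀ᶠ z in 𝓝[>] s, m * ‖γ z - γ s‖ ≤ K * (z - s) := by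
  have hIcc : Icc u v ∈ 𝓝[>] s := Icc_mem_nhdsGT_of_mem hs
  have hγs : Tendsto γ (𝓝[>] s) (𝓝 (γ s)) :=
    (hγ.1.continuousWithinAt (Ico_subset_Icc_self hs)).tendsto.mono_left
      (nhdsWithin_le_of_mem hIcc)
  filter_upwards [hγs.eventually (eventually_mul_norm_sub_le_of_lt_lowerDini hm), hIcc,
    self_mem_nhdsWithin] with z hz hzI (hsz : s < z)
  calc m * ‖γ z - γ s‖ ≤ ‖f (γ z) - f (γ s)‖ := hz
    _ = dist (σ z) (σ s) := by
        rw [dist_eq_norm, ← hγ.2 hzI, ← hγ.2 (Ico_subset_Icc_self hs)]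
        rfl
    _ ≤ K * dist z s := hσ.dist_le_mul z s
    _ = K * (z - s) := by rw [Real.dist_eq, abs_of_pos (sub_pos.2 hsz)]

lemma IsLiftOn.integral_norm_sub_le (x₀ : E) (hγ : IsLiftOn f σ γ (Icc u v))
    (hσ : LipschitzWith K σ) (huv : u ≤ v) (hle : ‖γ u - x₀‖ ≤ ‖γ v - x₀‖)
    (hη : IntervalIntegrable η volume ‖γ u - x₀‖ ‖γ v - x₀‖)
    (hD : ∀ s ∈ Ico u v, (η ‖γ s - x₀‖ : EReal) ≤ lowerDini f (γ s)) :
    ∫ t in ‖γ u - x₀‖..‖γ v - x₀‖, η t ≤ K * (v - u) := by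
  refine integral_le_mul_of_eventually_mul_sub_le (ρ := fun s => ‖γ s - x₀‖) huv K.2
    (hγ.1.sub continuousOn_const).norm hle hη fun s hs m hm0 hm => ?_
  filter_upwards [hγ.eventually_mul_norm_sub_le hσ hs
    ((EReal.coe_lt_coe_iff.2 hm).trans_le (hD s hs))] with z hz
  calc m * (‖γ z - x₀‖ - ‖γ s - x₀‖) ≤ m * ‖γ z - γ s‖ := by
        gcongr
        simpa using norm_sub_norm_le (γ z - x₀) (γ s - x₀)
    _ ≤ K * (z - s) := hz

lemma IsLiftOn.integral_norm_le_add (hγ : IsLiftOn f σ γ (Icc u v)) (hσ : LipschitzWith K σ)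
    (huv : u ≤ v) (hint : ∀ r, 0 ≤ r → IntervalIntegrable η volume 0 r)
    (hη : ∀ t, 0 ≤ t → 0 ≤ η t) (hD : ∀ x, (η ‖x‖ : EReal) ≤ lowerDini f x) :
    ∫ t in 0..‖γ v‖, η t ≤ (∫ t in 0..‖γ u‖, η t) + K * (v - u) := by
  have hint' : ∀ x : E, IntervalIntegrable η volume 0 ‖x‖ := fun x => hint _ (norm_nonneg x)
  rcases le_total ‖γ u‖ ‖γ v‖ with h | h
  · have huv' := (hint' (γ u)).symm.trans (hint' (γ v))
    have := hγ.integral_norm_sub_le 0 hσ huv (by simpa using h) (by simpa using huv')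
      fun s _ => by simpa using hD (γ s)
    simp only [sub_zero] at this
    rw [← intervalIntegral.integral_add_adjacent_intervals (hint' (γ u)) huv']
    linarith
  · calc ∫ t in 0..‖γ v‖, η t ≤ ∫ t in 0..‖γ u‖, η t :=
          intervalIntegral.integral_mono_interval le_rfl (norm_nonneg _) h
            (ae_restrict_of_forall_mem measurableSet_Ioc fun t ht => hη t ht.1.le) (hint' _)
      _ ≤ _ := le_add_of_nonneg_right (mul_nonneg K.2 (sub_nonneg.2 huv))

lemma IsLiftOn.lipschitzOnWith {m : ℝ} (hm : 0 < m) (hγ : IsLiftOn f σ γ (Icc u v))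
    (hσ : LipschitzWith K σ) (hD : ∀ s ∈ Icc u v, (m : EReal) ≤ lowerDini f (γ s)) :
    LipschitzOnWith (K / m.toNNReal) γ (Icc u v) := by
  refine LipschitzOnWith.of_dist_le_mul fun s hs s' hs' => ?_
  wlog h : s' ≤ s generalizing s s'
  · rw [dist_comm, dist_comm s]
    exact this s' hs' s hs (le_of_not_ge h)
  have hsub : Icc s' s ⊆ Icc u v := Icc_subset_Icc hs'.1 hs.2
  have := (hγ.mono hsub).integral_norm_sub_le (η := fun _ => m) (γ s') hσ h (by simp)
    intervalIntegrable_const fun r hr => hD r (hsub (Ico_subset_Icc_self hr))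
  simp only [sub_self, norm_zero, intervalIntegral.integral_const, sub_zero, smul_eq_mul] at this
  rw [dist_eq_norm, Real.dist_eq, abs_of_nonneg (sub_nonneg.2 h), NNReal.coe_div,
    Real.coe_toNNReal _ hm.le, div_mul_eq_mul_div, le_div_iff₀ hm]
  linarith

lemma lipschitzWith_add_smul [NormedSpace ℝ F] (c w : F) :
    LipschitzWith ‖w‖₊ fun s : ℝ => c + s • w :=
  LipschitzWith.of_dist_le_mul fun s t => by
    rw [dist_add_left, dist_eq_norm, ← sub_smul, norm_smul, Real.dist_eq, Real.norm_eq_abs,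
      mul_comm, coe_nnnorm]

theorem exists_isLiftOn_add_smul [CompleteSpace E] [NormedSpace ℝ F] (hf : IsLocalHomeomorph f)
    (hinf : ∀ r : ℝ, 0 ≤ r → ∃ m : ℝ, 0 < m ∧ ∀ x : E, ‖x‖ ≤ r → (m : EReal) ≤ lowerDini f x)
    (hint : ∀ r, 0 ≤ r → IntervalIntegrable η volume 0 r)
    (hdiv : Tendsto (fun r => ∫ t in (0 : ℝ)..r, η t) atTop atTop)
    (hη : ∀ t, 0 ≤ t → 0 ≤ η t) (hD : ∀ x, (η ‖x‖ : EReal) ≤ lowerDini f x) (x₀ : E) (w : F) :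
    ∃ γ, IsLiftOn f (fun s => f x₀ + s • w) γ (Icc 0 1) ∧ γ 0 = x₀ := by
  obtain ⟨R, hR, hR0⟩ := ((hdiv.eventually_gt_atTop ((∫ t in (0 : ℝ)..‖x₀‖, η t) + ‖w‖)).and
    (eventually_ge_atTop 0)).exists
  obtain ⟨m, hm, hmR⟩ := hinf R hR0
  have hσ := lipschitzWith_add_smul (f x₀) w
  refine exists_isLiftOn_of_lipschitzOnWith hf hσ.continuous (by simp)
    fun s hs γ hγ hγ₀ => hγ.lipschitzOnWith hm hσ fun r hr => hmR _ ?_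
  by_contra! hRr
  have hest := (hγ.mono (Icc_subset_Icc_right hr.2)).integral_norm_le_add hσ hr.1 hint hη hD
  have hmono := intervalIntegral.integral_mono_interval le_rfl hR0 hRr.le
    (ae_restrict_of_forall_mem measurableSet_Ioc fun t ht => hη t ht.1.le)
    (hint _ (norm_nonneg _))
  rw [hγ₀, coe_nnnorm] at hest
  nlinarith [norm_nonneg w, hr.2.trans hs.2]

end Dini

theorem global_inversion_integral_condition_general
    {E F : Type*} [NormedAddCommGroup E] [NormedSpace ℝ E] [CompleteSpace E]
    [NormedAddCommGroup F] [NormedSpace ℝ F]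
    (f : E → F) (hloc : IsLocalHomeomorph f)
    (hinf : ∀ r : ℝ, 0 ≤ r → ∃ m : ℝ, 0 < m ∧ ∀ x : E, ‖x‖ ≤ r → (m : EReal) ≤ lowerDini f x)
    (η : ℝ → ℝ)
    (hint : ∀ r : ℝ, 0 ≤ r → IntervalIntegrable η MeasureTheory.volume 0 r)
    (hdiv : Filter.Tendsto (fun r : ℝ => ∫ t in (0:ℝ)..r, η t) Filter.atTop Filter.atTop)
    (hη : ∀ t : ℝ, 0 ≤ t → 0 < η t ∧ ∀ x : E, ‖x‖ = t → (η t : EReal) ≤ lowerDini f x) :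
    IsHomeomorph f ∧ ∀ x : E, (∫ t in (0:ℝ)..‖x‖, η t) ≤ ‖f x - f 0‖ := by
  have hη₀ : ∀ t, 0 ≤ t → 0 ≤ η t := fun t ht => (hη t ht).1.le
  have hD : ∀ x : E, (η ‖x‖ : EReal) ≤ lowerDini f x := fun x => (hη _ (norm_nonneg x)).2 x rfl
  choose Γ hΓ hΓ₀ using fun y => exists_isLiftOn_add_smul hloc hinf hint hdiv hη₀ hD 0 (y - f 0)
  have hfg : ∀ y, f (Γ y 1) = y := fun y => by
    simpa using (hΓ y).2 (right_mem_Icc.2 zero_le_one)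
  have hg : Continuous fun y => Γ y 1 :=
    continuous_isLiftOn_apply_one hloc (H := fun q => f 0 + q.1 • (q.2 - f 0)) (by fun_prop) hΓ
      (by simpa only [hΓ₀] using continuous_const)
  have hgf : ∀ x, Γ (f x) 1 = x := by
    have h₀ : Γ (f 0) 1 = 0 := (hΓ (f 0)).eqOn hloc (γ' := fun _ => 0)
      ⟨continuousOn_const, fun s _ => by simp⟩ (left_mem_Icc.2 zero_le_one) (hΓ₀ _)
      (right_mem_Icc.2 zero_le_one)
    exact congrFun ((T2Space.isSeparatedMap f).eq_of_comp_eq hloc.isLocallyInjective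
      (hg.comp hloc.continuous) continuous_id (funext fun x => hfg (f x)) 0 h₀)
  refine ⟨isHomeomorph_iff_exists_inverse.2 ⟨hloc.continuous, fun y => Γ y 1, hgf, hfg, hg⟩,
    fun x => ?_⟩
  simpa [hgf, hΓ₀] using
    (hΓ (f x)).integral_norm_le_add (lipschitzWith_add_smul _ _) zero_le_one hint hη₀ hD

theorem global_inversion_integral_condition
    {E F : Type*} [NormedAddCommGroup E] [NormedSpace ℝ E] [CompleteSpace E]
    [NormedAddCommGroup F] [NormedSpace ℝ F] [CompleteSpace F]
    (f : E → F) (hloc : IsLocalHomeomorph f)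
    (hinf : ∀ r : ℝ, 0 ≤ r → ∃ m : ℝ, 0 < m ∧ ∀ x : E, ‖x‖ ≤ r → (m : EReal) ≤ lowerDini f x)
    (η : ℝ → ℝ)
    (hint : ∀ r : ℝ, 0 ≤ r → IntervalIntegrable η MeasureTheory.volume 0 r)
    (hdiv : Filter.Tendsto (fun r : ℝ => ∫ t in (0:ℝ)..r, η t) Filter.atTop Filter.atTop)
    (hη : ∀ t : ℝ, 0 ≤ t → 0 < η t ∧ ∀ x : E, ‖x‖ = t → (η t : EReal) ≤ lowerDini f x) :
    IsHomeomorph f ∧ ∀ x : E, (∫ t in (0:ℝ)..‖x‖, η t) ≤ ‖f x - f 0‖ :=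
  global_inversion_integral_condition_general f hloc hinf η hint hdiv hη
end

section
/- For every β ≥ 0, the 2×2 matrix A_β = [[1, −1], [1, β]] is invertible, and its inverse satisfies ‖A_β⁻¹‖ ≤ 2√2 in the operator norm; consequently //A_β// ≥ 1/(2√2), uniformly in β ≥ 0. -/
section Conorm

variable {n : ℕ} [NeZero n] {A B : EuclideanSpace ℝ (Fin n) →L[ℝ] EuclideanSpace ℝ (Fin n)}

lemma le_conorm {c : ℝ} (h : ∀ u, c * ‖u‖ ≤ ‖A u‖) : c ≤ conorm A := by
  refine le_csInf ⟨_, EuclideanSpace.single 0 1, by simp, rfl⟩ ?_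
  rintro _ ⟨u, hu, rfl⟩
  simpa [Set.mem_ofPred_eq.mp hu] using h u

lemma inv_le_conorm_of_comp_eq_id {C : ℝ} (hBA : B.comp A = .id ℝ _) (hB : ‖B‖ ≤ C) :
    C⁻¹ ≤ conorm A := by
  refine le_conorm fun u => ?_
  have hu : ‖u‖ ≤ C * ‖A u‖ := calc
    ‖u‖ = ‖B (A u)‖ := by
      rw [← ContinuousLinearMap.comp_apply, hBA, ContinuousLinearMap.id_apply]
    _ ≤ ‖B‖ * ‖A u‖ := B.le_opNorm _
    _ ≤ C * ‖A u‖ := by gcongr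
  rcases (norm_nonneg B).trans hB |>.eq_or_lt with hC | hC
  · simp [← hC]
  · exact (inv_mul_le_iff₀ hC).2 hu

end Conorm

namespace Matrix

open scoped Norms.Frobenius

section toEuclideanCLM

variable {𝕜 ι : Type*} [RCLike 𝕜] [Fintype ι] [DecidableEq ι]

lemma norm_toEuclideanCLM_le_frobenius (M : Matrix ι ι 𝕜) :
    ‖toEuclideanCLM (𝕜 := 𝕜) M‖ ≤ ‖M‖ := by
  refine ContinuousLinearMap.opNorm_le_bound _ (norm_nonneg _) fun x => ?_
  calc ‖toEuclideanCLM (𝕜 := 𝕜) M x‖ = ‖replicateCol (Fin 1) (M *ᵥ x.ofLp)‖ :=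
        (frobenius_norm_replicateCol _).symm
    _ = ‖M * replicateCol (Fin 1) x.ofLp‖ := by rw [replicateCol_mulVec]
    _ ≤ ‖M‖ * ‖replicateCol (Fin 1) x.ofLp‖ := frobenius_norm_mul _ _
    _ = ‖M‖ * ‖x‖ := congrArg (‖M‖ * ·) (frobenius_norm_replicateCol _)

variable {M : Matrix ι ι 𝕜} {B : EuclideanSpace 𝕜 ι →L[𝕜] EuclideanSpace 𝕜 ι}

lemma toEuclideanCLM_inv_comp_self (hM : IsUnit M.det) :
    (toEuclideanCLM (𝕜 := 𝕜) M⁻¹).comp (toEuclideanCLM (𝕜 := 𝕜) M) = .id 𝕜 _ := by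
  rw [← ContinuousLinearMap.mul_def, ← map_mul, nonsing_inv_mul M hM, map_one]
  rfl

lemma eq_toEuclideanCLM_inv_of_comp_eq_id (hM : IsUnit M.det)
    (hB : B.comp (toEuclideanCLM (𝕜 := 𝕜) M) = .id 𝕜 _) : B = toEuclideanCLM (𝕜 := 𝕜) M⁻¹ :=
  left_inv_eq_right_inv hB <| by rw [← map_mul, mul_nonsing_inv M hM, map_one]

lemma bijective_toEuclideanCLM (hM : IsUnit M.det) :
    Function.Bijective (toEuclideanCLM (𝕜 := 𝕜) M) :=
  ContinuousLinearMap.isUnit_iff_bijective.1 <|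
    ((isUnit_iff_isUnit_det M).2 hM).map (toEuclideanCLM (n := ι) (𝕜 := 𝕜))

end toEuclideanCLM

lemma frobenius_norm_fin_two_of (a b c d : ℝ) :
    ‖!![a, b; c, d]‖ = √(a ^ 2 + b ^ 2 + c ^ 2 + d ^ 2) := by
  simp [frobenius_norm_def, Fin.sum_univ_two, Real.sqrt_eq_rpow, add_assoc]

lemma inv_fin_two_of {K : Type*} [Field K] (a b c d : K) :
    !![a, b; c, d]⁻¹ = (a * d - b * c)⁻¹ • !![d, -b; -c, a] := by
  rw [inv_def, det_fin_two_of, adjugate_fin_two_of, Ring.inverse_eq_inv']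

end Matrix

open Matrix

open scoped Matrix.Norms.Frobenius in
lemma frobenius_norm_inv_le_two_mul_sqrt_two {β : ℝ} (hβ : 0 ≤ β) :
    ‖(!![1, -1; 1, β] : Matrix (Fin 2) (Fin 2) ℝ)⁻¹‖ ≤ 2 * √2 := by
  have hβ1 : 0 < β + 1 := by linarith
  rw [inv_fin_two_of, norm_smul, frobenius_norm_fin_two_of,
    show (1 : ℝ) * β - -1 * 1 = β + 1 by ring, norm_inv, Real.norm_of_nonneg hβ1.le,
    inv_mul_le_iff₀ hβ1, Real.sqrt_le_iff, mul_pow, mul_pow, Real.sq_sqrt zero_le_two]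
  constructor
  · positivity
  · nlinarith

theorem matrix_family_equi_invertible (β : ℝ) (hβ : 0 ≤ β) :
    Function.Bijective
      (Matrix.toEuclideanCLM (𝕜 := ℝ) !![1, -1; 1, β]) ∧
    (∀ B : EuclideanSpace ℝ (Fin 2) →L[ℝ] EuclideanSpace ℝ (Fin 2),
      (Matrix.toEuclideanCLM (𝕜 := ℝ) !![1, -1; 1, β]).comp B = ContinuousLinearMap.id ℝ _ →
      B.comp (Matrix.toEuclideanCLM (𝕜 := ℝ) !![1, -1; 1, β]) = ContinuousLinearMap.id ℝ _ →
      ‖B‖ ≤ 2 * Real.sqrt 2) ∧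
    conorm (Matrix.toEuclideanCLM (𝕜 := ℝ) !![1, -1; 1, β]) ≥ 1 / (2 * Real.sqrt 2) := by
  have hdet : IsUnit (!![1, -1; 1, β] : Matrix (Fin 2) (Fin 2) ℝ).det := by
    rw [det_fin_two_of, isUnit_iff_ne_zero]
    linarith
  have h_inv_norm : ‖toEuclideanCLM (𝕜 := ℝ) (!![1, -1; 1, β] : Matrix (Fin 2) (Fin 2) ℝ)⁻¹‖ ≤
      2 * √2 :=
    (norm_toEuclideanCLM_le_frobenius _).trans (frobenius_norm_inv_le_two_mul_sqrt_two hβ)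
  refine ⟨bijective_toEuclideanCLM hdet, fun B _ hBA => ?_, ?_⟩
  · rw [eq_toEuclideanCLM_inv_of_comp_eq_id hdet hBA]
    exact h_inv_norm
  · rw [ge_iff_le, one_div]
    exact inv_le_conorm_of_comp_eq_id (toEuclideanCLM_inv_comp_self hdet) h_inv_norm
end
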